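/- Let κ₀, κ₁, κ₂, κ₃ be quaternionic spinors such that λ_{mn} := {κ_m, κ_n} is nonzero for all m ≠ n. Then the non-commutative Ptolemy equation holds: λ₀₂⁻¹ λ₀₁ λ₃₁⁻¹ λ₃₂ + λ₀₂⁻¹ λ₀₃ λ₁₃⁻¹ λ₁₂ = 1. (By the paper's Theorem 2, λ_{mn} is the quaternionic lambda length from the spin-decorated horosphere in H⁴ corresponding to κ_m to that corresponding to κ_n, so this is Theorem 3 of the paper.) -/

import Mathlib

/-!
The spinors `κ₁, κ₃` have vanishing self-bracket and `{κ₁, κ₃}, {κ₃, κ₁} ≠ 0`; bracketing a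
relation `κ₁ s + κ₃ t = 0` with `κ₁` and with `κ₃` then forces `t = s = 0`, so they are
linearly independent in the rank-two right `ℍ`-module `ℍ²`, hence a basis. Writing
`κ₂ = κ₁ c + κ₃ d` and using that the bracket is right `ℍ`-linear in its second argument gives
`{κ₃, κ₂} = {κ₃, κ₁} c`, `{κ₁, κ₂} = {κ₁, κ₃} d` and `{κ₀, κ₂} = {κ₀, κ₁} c + {κ₀, κ₃} d`,
which is the Ptolemy equation multiplied on the left by `{κ₀, κ₂}`.
-/

open Quaternion

noncomputable section

/-- The involution `q* = a + bi + cj - dk` on quaternions (Clifford reversion). -/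
def qstar (q : ℍ[ℝ]) : ℍ[ℝ] := ⟨q.re, q.imI, q.imJ, -q.imK⟩

/-- The involution `q' = a - bi - cj + dk` on quaternions. -/
def qprime (q : ℍ[ℝ]) : ℍ[ℝ] := ⟨q.re, -q.imI, -q.imJ, q.imK⟩

/-- A paravector is an element of `ℝ + ℝi + ℝj`, i.e. a quaternion with zero `k`-component. -/
def IsParavector (q : ℍ[ℝ]) : Prop := q.imK = 0

/-- The quaternion `k`. -/
def qk : ℍ[ℝ] := ⟨0, 0, 0, 1⟩

/-- A quaternionic spinor: a pair `(ξ, η) ≠ (0,0)` with `ξ * conj η` a paravector. -/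
def IsSpinor (κ : ℍ[ℝ] × ℍ[ℝ]) : Prop := κ ≠ 0 ∧ IsParavector (κ.1 * star κ.2)

/-- The bracket `{κ₁, κ₂} = ξ₁* η₂ − η₁* ξ₂`. -/
def bracket (κ₁ κ₂ : ℍ[ℝ] × ℍ[ℝ]) : ℍ[ℝ] := qstar κ₁.1 * κ₂.2 - qstar κ₁.2 * κ₂.1

/-- Right multiplication `κ x = (ξ x, η x)`. -/
def rmul (κ : ℍ[ℝ] × ℍ[ℝ]) (x : ℍ[ℝ]) : ℍ[ℝ] × ℍ[ℝ] := (κ.1 * x, κ.2 * x)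

/-- The complementary pair `κ̌ = (η', −ξ')`. -/
def qcheck (κ : ℍ[ℝ] × ℍ[ℝ]) : ℍ[ℝ] × ℍ[ℝ] := (qprime κ.2, -qprime κ.1)

/-- The real inner product on `ℍ²`: `⟨κ₁, κ₂⟩ = Re (ξ₁ ξ̄₂ + η₁ η̄₂)`. -/
def qinner (κ₁ κ₂ : ℍ[ℝ] × ℍ[ℝ]) : ℝ := (κ₁.1 * star κ₂.1 + κ₁.2 * star κ₂.2).re

/-- The squared norm `|κ|² = |ξ|² + |η|²` on `ℍ²`. -/
def qnsq (κ : ℍ[ℝ] × ℍ[ℝ]) : ℝ := Quaternion.normSq κ.1 + Quaternion.normSq κ.2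

@[simp] lemma qstar_re (q : ℍ[ℝ]) : (qstar q).re = q.re := rfl
@[simp] lemma qstar_imI (q : ℍ[ℝ]) : (qstar q).imI = q.imI := rfl
@[simp] lemma qstar_imJ (q : ℍ[ℝ]) : (qstar q).imJ = q.imJ := rfl
@[simp] lemma qstar_imK (q : ℍ[ℝ]) : (qstar q).imK = -q.imK := rfl

@[simp] lemma qstar_qstar (q : ℍ[ℝ]) : qstar (qstar q) = q := by
  ext <;> simp

lemma qstar_mul (p q : ℍ[ℝ]) : qstar (p * q) = qstar q * qstar p := by
  ext <;> simp [re_mul, imI_mul, imJ_mul, imK_mul] <;> ring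

lemma qstar_eq_self_of_isParavector {q : ℍ[ℝ]} (h : IsParavector q) : qstar q = q := by
  rw [IsParavector] at h
  ext <;> simp [h]

lemma imK_qstar_mul (ξ η : ℍ[ℝ]) : (qstar ξ * η).imK = -(ξ * star η).imK := by
  simp only [imK_mul, qstar_re, qstar_imI, qstar_imJ, qstar_imK, re_star, imI_star,
    imJ_star, imK_star]
  ring

lemma bracket_self_eq_zero {κ : ℍ[ℝ] × ℍ[ℝ]} (h : IsParavector (κ.1 * star κ.2)) :
    bracket κ κ = 0 := by
  have hx : IsParavector (qstar κ.1 * κ.2) := by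
    rw [IsParavector, imK_qstar_mul, h, neg_zero]
  have : qstar κ.2 * κ.1 = qstar κ.1 * κ.2 := by
    rw [← qstar_eq_self_of_isParavector hx, qstar_mul, qstar_qstar]
  rw [bracket, this, sub_self]

lemma bracket_add_right (κ μ ν : ℍ[ℝ] × ℍ[ℝ]) :
    bracket κ (μ + ν) = bracket κ μ + bracket κ ν := by
  simp only [bracket, Prod.fst_add, Prod.snd_add, mul_add]; abel

lemma bracket_rmul_right (κ μ : ℍ[ℝ] × ℍ[ℝ]) (a : ℍ[ℝ]) :
    bracket κ (rmul μ a) = bracket κ μ * a := by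
  simp only [bracket, rmul, sub_mul, mul_assoc]

lemma op_smul_eq_rmul (s : ℍ[ℝ]ᵐᵒᵖ) (κ : ℍ[ℝ] × ℍ[ℝ]) : s • κ = rmul κ s.unop := by
  ext <;> simp [rmul, MulOpposite.smul_eq_mul_unop]

lemma finrank_mulOpposite_prod : Module.finrank ℍ[ℝ]ᵐᵒᵖ (ℍ[ℝ] × ℍ[ℝ]) = 2 := by
  let e := MulOpposite.opLinearEquiv (M := ℍ[ℝ]) ℍ[ℝ]ᵐᵒᵖ
  rw [(e.prodCongr e).finrank_eq, Module.finrank_prod, Module.finrank_self]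

lemma linearIndependent_pair_of_bracket {κ₁ κ₃ : ℍ[ℝ] × ℍ[ℝ]}
    (h₁ : bracket κ₁ κ₁ = 0) (h₃ : bracket κ₃ κ₃ = 0)
    (h₁₃ : bracket κ₁ κ₃ ≠ 0) (h₃₁ : bracket κ₃ κ₁ ≠ 0) :
    LinearIndependent ℍ[ℝ]ᵐᵒᵖ ![κ₁, κ₃] := by
  rw [LinearIndependent.pair_iff]
  intro s t hst
  rw [op_smul_eq_rmul, op_smul_eq_rmul] at hst
  have hbr : ∀ μ, bracket μ κ₁ * s.unop + bracket μ κ₃ * t.unop = 0 := fun μ ↦ by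
    rw [← bracket_rmul_right, ← bracket_rmul_right, ← bracket_add_right, hst]
    simp [bracket]
  have ht : t.unop = 0 := by simpa [h₁, h₁₃] using hbr κ₁
  have hs : s.unop = 0 := by simpa [h₃, h₃₁] using hbr κ₃
  exact ⟨(MulOpposite.unop_eq_zero_iff s).1 hs, (MulOpposite.unop_eq_zero_iff t).1 ht⟩

lemma exists_eq_rmul_add_rmul {κ₁ κ₃ : ℍ[ℝ] × ℍ[ℝ]}
    (h₁ : bracket κ₁ κ₁ = 0) (h₃ : bracket κ₃ κ₃ = 0)
    (h₁₃ : bracket κ₁ κ₃ ≠ 0) (h₃₁ : bracket κ₃ κ₁ ≠ 0) (ρ : ℍ[ℝ] × ℍ[ℝ]) :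
    ∃ c d : ℍ[ℝ], ρ = rmul κ₁ c + rmul κ₃ d := by
  have hspan := (linearIndependent_pair_of_bracket h₁ h₃ h₁₃ h₃₁).span_eq_top_of_card_eq_finrank
    (by rw [finrank_mulOpposite_prod, Fintype.card_fin])
  have hρ : ρ ∈ Submodule.span ℍ[ℝ]ᵐᵒᵖ {κ₁, κ₃} := by
    rw [← Matrix.range_cons_cons_empty, hspan]; trivial
  obtain ⟨c, d, hcd⟩ := Submodule.mem_span_pair.1 hρ
  exact ⟨c.unop, d.unop, by rw [← hcd, op_smul_eq_rmul, op_smul_eq_rmul]⟩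

lemma bracket_eq_add_of_bracket_self_eq_zero {κ₀ κ₁ κ₂ κ₃ : ℍ[ℝ] × ℍ[ℝ]}
    (h₁ : bracket κ₁ κ₁ = 0) (h₃ : bracket κ₃ κ₃ = 0)
    (h₁₃ : bracket κ₁ κ₃ ≠ 0) (h₃₁ : bracket κ₃ κ₁ ≠ 0) :
    bracket κ₀ κ₂ = bracket κ₀ κ₁ * ((bracket κ₃ κ₁)⁻¹ * bracket κ₃ κ₂) +
      bracket κ₀ κ₃ * ((bracket κ₁ κ₃)⁻¹ * bracket κ₁ κ₂) := by
  obtain ⟨c, d, rfl⟩ := exists_eq_rmul_add_rmul h₁ h₃ h₁₃ h₃₁ κ₂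
  simp only [bracket_add_right, bracket_rmul_right, h₁, h₃, zero_mul, zero_add, add_zero,
    inv_mul_cancel_left₀ h₁₃, inv_mul_cancel_left₀ h₃₁]

theorem noncommutative_ptolemy_general (κ₀ κ₁ κ₂ κ₃ : ℍ[ℝ] × ℍ[ℝ])
    (h₁ : IsSpinor κ₁) (h₃ : IsSpinor κ₃)
    (hne : ∀ m n : Fin 4, m ≠ n → bracket (![κ₀, κ₁, κ₂, κ₃] m) (![κ₀, κ₁, κ₂, κ₃] n) ≠ 0) :
    (bracket κ₀ κ₂)⁻¹ * bracket κ₀ κ₁ * (bracket κ₃ κ₁)⁻¹ * bracket κ₃ κ₂ +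
    (bracket κ₀ κ₂)⁻¹ * bracket κ₀ κ₃ * (bracket κ₁ κ₃)⁻¹ * bracket κ₁ κ₂ = 1 := by
  have h₀₂ : bracket κ₀ κ₂ ≠ 0 := hne 0 2 (by decide)
  have h₁₃ : bracket κ₁ κ₃ ≠ 0 := hne 1 3 (by decide)
  have h₃₁ : bracket κ₃ κ₁ ≠ 0 := hne 3 1 (by decide)
  have hexp := bracket_eq_add_of_bracket_self_eq_zero (κ₀ := κ₀) (κ₂ := κ₂)
    (bracket_self_eq_zero h₁.2) (bracket_self_eq_zero h₃.2) h₁₃ h₃₁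
  simp only [mul_assoc]
  rw [← mul_add, ← hexp, inv_mul_cancel₀ h₀₂]

/-- The non-commutative Ptolemy equation: for quaternionic spinors `κ₀, κ₁, κ₂, κ₃` with
all pairwise brackets (lambda lengths) `λ_{mn} = {κ_m, κ_n}` nonzero,
`λ₀₂⁻¹ λ₀₁ λ₃₁⁻¹ λ₃₂ + λ₀₂⁻¹ λ₀₃ λ₁₃⁻¹ λ₁₂ = 1`. -/
theorem noncommutative_ptolemy (κ₀ κ₁ κ₂ κ₃ : ℍ[ℝ] × ℍ[ℝ])
    (h₀ : IsSpinor κ₀) (h₁ : IsSpinor κ₁) (h₂ : IsSpinor κ₂) (h₃ : IsSpinor κ₃)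
    (hne : ∀ m n : Fin 4, m ≠ n → bracket (![κ₀, κ₁, κ₂, κ₃] m) (![κ₀, κ₁, κ₂, κ₃] n) ≠ 0) :
    (bracket κ₀ κ₂)⁻¹ * bracket κ₀ κ₁ * (bracket κ₃ κ₁)⁻¹ * bracket κ₃ κ₂ +
    (bracket κ₀ κ₂)⁻¹ * bracket κ₀ κ₃ * (bracket κ₁ κ₃)⁻¹ * bracket κ₁ κ₂ = 1 :=
  noncommutative_ptolemy_general κ₀ κ₁ κ₂ κ₃ h₁ h₃ hne
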